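/- Let R be a Noetherian local domain, P a nonzero nonmaximal prime of R, {R_n} a sequence of local quadratic transforms of R along R_P with induced sequence {R̄_n} of local quadratic transforms of R̄ = R/P. Set S = ⋃ R_n and S̄ = ⋃ R̄_n, and let S̃ be the pullback of S̄ along R_P → κ(P). If S̄ is a rank 1 valuation ring with real-valued valuation ν and the multiplicity sequence Σ_n ν(m̄_n) diverges, then S = S̃; that is, PR_P ⊆ S. -/

import Mathlib

open Filter

section GenLQT

variable (F : Type) [Field F]

/-- The nonunits of a local subring `A` of a field `F`. -/
def genMaxSet (A : Subring F) : Set F :=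
  {a | a ∈ A ∧ ¬ ∃ b ∈ A, a * b = 1}

/-- The ring `A[m_A/x]`. -/
def genBlowup (A : Subring F) (x : F) : Subring F :=
  Subring.closure ((A : Set F) ∪ {y | ∃ a ∈ genMaxSet F A, y * x = a})

/-- `A'` is a local quadratic transform of the local subring `A` of `F`. -/
def IsGenLQT (A A' : Subring F) : Prop :=
  ∃ x ∈ genMaxSet F A, x ≠ 0 ∧
    ∃ Q : Ideal (genBlowup F A x), Q.IsPrime ∧
      (∀ a ∈ genMaxSet F A, ∃ q : genBlowup F A x, q ∈ Q ∧ (q : F) = a) ∧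
      (A' : Set F) = {y | ∃ b s : genBlowup F A x, s ∉ Q ∧ y * (s : F) = (b : F)}

/-- The pullback `α⁻¹(T)` of a subset `T` of `κ(P)` along `α : R_P → κ(P)`. -/
def pullbackSet (RP : Subring F) (K : Type) [Field K] (α : RP →+* K) (T : Set K) :
    Set F :=
  {y | ∃ h : y ∈ RP, α ⟨y, h⟩ ∈ T}

end GenLQT

/-!
An element `y ∈ P R_P` is a fraction `q / t` with `q ∈ P` and `t ∉ P`. While `y ∉ R_n`, both
`t` and `q` are nonunits of `R_n`; as `R_{n+1}` is a localization of `R_n[m_n / x]`, the pair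
`(t / x, q / x)` again presents `y` inside `R_{n+1}`. Since `R_n` is local, `x̄` is a nonzero
nonunit of `R̄_n`, and the step lowers `ν(t̄) ≥ 0` by `ν(x̄) ≥ ν(m̄_n)`. Divergence of
`∑ ν(m̄_n)` therefore forces `y` into some `R_n`, and `S̃ = S + P R_P = S` follows.
-/

section

variable {F K : Type} [Field F] [Field K]

lemma mem_genMaxSet_iff {A : Subring F} {a : A} : (a : F) ∈ genMaxSet F A ↔ ¬ IsUnit a := by
  simp [genMaxSet, isUnit_iff_exists_inv, Subtype.ext_iff]

namespace IsGenLQT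

variable {A A' : Subring F}

lemma le (h : IsGenLQT F A A') : A ≤ A' := by
  obtain ⟨x, -, -, Q, hQ, -, hA'⟩ := h
  intro a ha
  have : a ∈ (A' : Set F) := hA' ▸
    ⟨⟨a, Subring.subset_closure (Or.inl ha)⟩, 1, (Ideal.ne_top_iff_one Q).mp hQ.ne_top, by simp⟩
  exact this

lemma exists_mul_inv_mem (h : IsGenLQT F A A') :
    ∃ x ∈ genMaxSet F A, x ≠ 0 ∧ ∀ a ∈ genMaxSet F A, a * x⁻¹ ∈ A' := by
  obtain ⟨x, hx, hx0, Q, hQ, -, hA'⟩ := h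
  refine ⟨x, hx, hx0, fun a ha => ?_⟩
  have hB : a * x⁻¹ ∈ genBlowup F A x :=
    Subring.subset_closure (Or.inr ⟨a, ha, by field_simp⟩)
  have : a * x⁻¹ ∈ (A' : Set F) := hA' ▸
    ⟨⟨_, hB⟩, 1, (Ideal.ne_top_iff_one Q).mp hQ.ne_top, by simp⟩
  exact this

lemma isLocalRing (h : IsGenLQT F A A') : IsLocalRing A' := by
  obtain ⟨x, -, -, Q, hQ, -, hA'⟩ := h
  have hne : ∀ s : genBlowup F A x, s ∉ Q → (s : F) ≠ 0 := fun s hs h0 =>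
    hs (by rw [show s = 0 from Subtype.ext h0]; exact Q.zero_mem)
  have hmem : ∀ b s : genBlowup F A x, s ∉ Q → (b / s : F) ∈ A' := fun b s hs => by
    have : (b / s : F) ∈ (A' : Set F) := hA' ▸ ⟨b, s, hs, div_mul_cancel₀ _ (hne s hs)⟩
    exact this
  have hunit : ∀ (a : A') (b s : genBlowup F A x), b ∉ Q → s ∉ Q → (a : F) = b / s →
      IsUnit a := fun a b s hb hs hab =>
    IsUnit.of_mul_eq_one (a := a) ⟨_, hmem s b hb⟩ (Subtype.ext (by
      simp only [hab, Subring.coe_mul, Subring.coe_one]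
      field_simp [hne b hb, hne s hs]))
  refine IsLocalRing.of_isUnit_or_isUnit_one_sub_self fun a => ?_
  have ha : (a : F) ∈ (A' : Set F) := a.2
  rw [hA'] at ha
  obtain ⟨b, s, hs, hab⟩ := ha
  by_cases hb : b ∈ Q
  · refine .inr (hunit _ (s - b) s (fun h => hs (by simpa using Q.add_mem h hb)) hs ?_)
    rw [eq_div_iff (hne s hs)]
    push_cast
    linear_combination -hab
  · exact .inl (hunit a b s hb hs (eq_div_of_mul_eq (hne s hs) hab))

end IsGenLQT

section Residue

variable {RP : Subring F} (α : RP →+* K)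

lemma mem_genMaxSet_of_map_eq_zero {A : Subring F} (hA : A ≤ RP) {a : RP} (ha : (a : F) ∈ A)
    (h : α a = 0) : (a : F) ∈ genMaxSet F A := by
  refine ⟨ha, fun ⟨b, hb, hab⟩ => zero_ne_one (α := K) ?_⟩
  calc (0 : K) = α a * α ⟨b, hA hb⟩ := by rw [h, zero_mul]
    _ = 1 := by rw [← map_mul, ← map_one α]; exact congrArg α (Subtype.ext hab)

lemma map_mem_genMaxSet {A : Subring F} [IsLocalRing A] (hA : A ≤ RP) {x : RP}
    (hx : (x : F) ∈ genMaxSet F A) :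
    α x ∈ genMaxSet K (Subring.map α (Subring.comap RP.subtype A)) := by
  refine ⟨Subring.mem_map.mpr ⟨x, hx.1, rfl⟩, ?_⟩
  rintro ⟨_, ⟨u, hu, rfl⟩, hxu⟩
  have hu : (u : F) ∈ A := hu
  -- `1 - x u ∈ ker α` is a nonunit, so `x u` is a unit of the local ring `A`.
  have hk : ((1 - x * u : RP) : F) ∈ genMaxSet F A :=
    mem_genMaxSet_of_map_eq_zero α hA (by push_cast; exact sub_mem (one_mem A) (mul_mem hx.1 hu))
      (by rw [map_sub, map_mul, hxu, map_one, sub_self])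
  have hunit := IsLocalRing.isUnit_one_sub_self_of_mem_nonunits _
    ((mem_genMaxSet_iff (a := ⟨_, hk.1⟩)).mp hk)
  refine (mem_genMaxSet_iff (a := ⟨(x : F), hx.1⟩)).mp hx
    (isUnit_of_mul_isUnit_left (y := (⟨(u : F), hu⟩ : A)) ?_)
  convert hunit using 1
  ext
  simp

/-- A presentation of `y ∈ P R_P = ker α` as a fraction of elements of `A`. -/
def IsKerFraction (A : Subring F) (y : F) (t q : RP) : Prop :=
  (t : F) ∈ A ∧ (q : F) ∈ A ∧ α t ≠ 0 ∧ α q = 0 ∧ y * t = q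

variable {α}

lemma IsKerFraction.exists_of_isGenLQT {A A' : Subring F} [IsLocalRing A]
    (hAA' : IsGenLQT F A A') (hA : A ≤ RP) (hA' : A' ≤ RP) {y : F} (hy : y ∉ A) {t q : RP}
    (h : IsKerFraction α A y t q) :
    ∃ x t' : RP, α x ∈ genMaxSet K (Subring.map α (Subring.comap RP.subtype A)) ∧
      t = t' * x ∧ ∃ q', IsKerFraction α A' y t' q' := by
  obtain ⟨ht, hq, hαt, hαq, hyt⟩ := h
  have ht' : (t : F) ∈ genMaxSet F A := by
    refine ⟨ht, fun ⟨u, hu, htu⟩ => hy ?_⟩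
    rw [show y = q * u by rw [← hyt, mul_assoc, htu, mul_one]]
    exact mul_mem hq hu
  have hq' := mem_genMaxSet_of_map_eq_zero α hA hq hαq
  obtain ⟨x, hx, hx0, hdiv⟩ := hAA'.exists_mul_inv_mem
  let x' : RP := ⟨x, hA hx.1⟩
  let t' : RP := ⟨t * x⁻¹, hA' (hdiv _ ht')⟩
  let q' : RP := ⟨q * x⁻¹, hA' (hdiv _ hq')⟩
  have htx : t = t' * x' := Subtype.ext (by simp [t', x', hx0])
  have hqx : q = q' * x' := Subtype.ext (by simp [q', x', hx0])
  rw [htx, map_mul] at hαt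
  rw [hqx, map_mul] at hαq
  refine ⟨x', t', map_mem_genMaxSet α hA hx, htx, q', hdiv _ ht', hdiv _ hq',
    left_ne_zero_of_mul hαt, (mul_eq_zero.mp hαq).resolve_right (right_ne_zero_of_mul hαt), ?_⟩
  simp [t', q', ← hyt, mul_assoc]

variable {seq : ℕ → Subring F} {ν : K → ℝ} {μ : ℕ → ℝ}

lemma IsKerFraction.exists_sum_le (hlqt : ∀ n, IsGenLQT F (seq n) (seq (n + 1)))
    (hle : ∀ n, seq n ≤ RP) (hloc : ∀ n, IsLocalRing (seq n))
    (hmul : ∀ a b : K, a ≠ 0 → b ≠ 0 → ν (a * b) = ν a + ν b)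
    (hμ : ∀ n, ∀ z ∈ genMaxSet K (Subring.map α (Subring.comap RP.subtype (seq n))), z ≠ 0 →
      μ n ≤ ν z)
    {y : F} (hy : ∀ n, y ∉ seq n) {t q : RP} (h : IsKerFraction α (seq 0) y t q) (k : ℕ) :
    ∃ t' q' : RP, IsKerFraction α (seq k) y t' q' ∧
      ν (α t') + ∑ j ∈ Finset.range k, μ j ≤ ν (α t) := by
  induction k with
  | zero => exact ⟨t, q, h, by simp⟩
  | succ k ih =>
    obtain ⟨t₁, q₁, h₁, hsum⟩ := ih
    obtain ⟨x, t₂, hx, rfl, q₂, h₂⟩ := h₁.exists_of_isGenLQT (hlqt k) (hle k) (hle (k + 1)) (hy k)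
    have hαt := h₁.2.2.1
    rw [map_mul] at hαt hsum
    have hν := hmul _ _ (left_ne_zero_of_mul hαt) (right_ne_zero_of_mul hαt)
    have hμx := hμ k _ hx (right_ne_zero_of_mul hαt)
    refine ⟨t₂, q₂, h₂, ?_⟩
    rw [Finset.sum_range_succ]
    linarith

lemma IsKerFraction.exists_mem (hlqt : ∀ n, IsGenLQT F (seq n) (seq (n + 1)))
    (hle : ∀ n, seq n ≤ RP) (hloc : ∀ n, IsLocalRing (seq n))
    (hmul : ∀ a b : K, a ≠ 0 → b ≠ 0 → ν (a * b) = ν a + ν b)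
    (hpos : ∀ n, ∀ z ∈ Subring.map α (Subring.comap RP.subtype (seq n)), z ≠ 0 → 0 ≤ ν z)
    (hμ : ∀ n, ∀ z ∈ genMaxSet K (Subring.map α (Subring.comap RP.subtype (seq n))), z ≠ 0 →
      μ n ≤ ν z)
    (hdiv : Tendsto (fun N => ∑ n ∈ Finset.range N, μ n) atTop atTop)
    {y : F} {t q : RP} (h : IsKerFraction α (seq 0) y t q) : ∃ n, y ∈ seq n := by
  by_contra! hy
  obtain ⟨k, hk⟩ := (hdiv.eventually_gt_atTop (ν (α t))).exists
  obtain ⟨t', q', h', hsum⟩ := h.exists_sum_le hlqt hle hloc hmul hμ hy k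
  have := hpos k _ (Subring.mem_map.mpr ⟨t', h'.1, rfl⟩) h'.2.2.1
  linarith

lemma pullbackSet_iUnion_map_eq (hmono : Monotone seq) (hle : ∀ n, seq n ≤ RP)
    (hker : ∀ d : RP, α d = 0 → ∃ n, (d : F) ∈ seq n) :
    pullbackSet F RP K α (⋃ n, (Subring.map α (Subring.comap RP.subtype (seq n)) : Set K)) =
      ⋃ n, (seq n : Set F) := by
  apply Set.Subset.antisymm
  · rintro y ⟨hy, hT⟩
    obtain ⟨n, z, hz, hαz⟩ := Set.mem_iUnion.mp hT
    obtain ⟨m, hm⟩ := hker (⟨y, hy⟩ - z) (by rw [map_sub, hαz, sub_self])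
    rw [Set.mem_iUnion]
    refine ⟨max n m, ?_⟩
    rw [show y = z + ((⟨y, hy⟩ - z : RP) : F) by simp]
    exact add_mem (hmono (le_max_left n m) hz) (hmono (le_max_right n m) hm)
  · intro y hy
    obtain ⟨n, hn⟩ := Set.mem_iUnion.mp hy
    exact ⟨hle n hn, Set.mem_iUnion.mpr ⟨n, Subring.mem_map.mpr ⟨⟨y, hle n hn⟩, hn, rfl⟩⟩⟩

end Residue

lemma map_eq_zero_iff_mem {R RP : Subring F} {P : Ideal R} (hP : P.IsPrime) {α : RP →+* K}
    (hker : ∀ y : RP, α y = 0 ↔ ∃ p s : R, p ∈ P ∧ s ∉ P ∧ (y : F) * (s : F) = (p : F))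
    {r : RP} {a : R} (hr : (r : F) = a) : α r = 0 ↔ a ∈ P := by
  rw [hker]
  constructor
  · rintro ⟨p, s, hp, hs, hrs⟩
    have has : a * s = p := Subtype.ext (by rw [Subring.coe_mul, ← hr]; exact hrs)
    exact (hP.mem_or_mem (has ▸ hp)).resolve_right hs
  · exact fun ha => ⟨a, 1, ha, (Ideal.ne_top_iff_one P).mp hP.ne_top, by simp [hr]⟩

end

theorem union_eq_pullback_of_divergent_multiplicity_general
    (F : Type) [Field F] (R : Subring F)
    [IsLocalRing R]
    (P : Ideal R) (hPp : P.IsPrime)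
    (RP : Subring F)
    (K : Type) [Field K] (α : RP →+* K)
    (hker : ∀ y : RP, α y = 0 ↔
      ∃ p s : R, p ∈ P ∧ s ∉ P ∧ (y : F) * (s : F) = (p : F))
    (seq : ℕ → Subring F) (hseq0 : seq 0 = R)
    (hseq : ∀ n, IsGenLQT F (seq n) (seq (n + 1)) ∧ seq n ≤ RP)
    (ν : K → ℝ)
    (hmul : ∀ a b : K, a ≠ 0 → b ≠ 0 → ν (a * b) = ν a + ν b)
    (hSbarval : ∀ y : K, y ≠ 0 →
      ((∃ n, y ∈ Subring.map α (Subring.comap RP.subtype (seq n))) ↔ 0 ≤ ν y))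
    (μ : ℕ → ℝ)
    (hμ : ∀ n, μ n = sInf (ν ''
      {a | a ∈ genMaxSet K (Subring.map α (Subring.comap RP.subtype (seq n))) ∧ a ≠ 0}))
    (hdiv : Tendsto (fun N => ∑ n ∈ Finset.range N, μ n) atTop atTop) :
    pullbackSet F RP K α
        (⋃ n, (Subring.map α (Subring.comap RP.subtype (seq n)) : Set K)) =
      ⋃ n, (seq n : Set F) ∧
    ∀ y : F, (∃ q t : R, q ∈ P ∧ t ∉ P ∧ y * (t : F) = (q : F)) →
      ∃ n, y ∈ seq n := by
  have hlqt n := (hseq n).1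
  have hle n := (hseq n).2
  have hloc : ∀ n, IsLocalRing (seq n)
    | 0 => hseq0 ▸ inferInstance
    | n + 1 => (hlqt n).isLocalRing
  have hpos n z (hz : z ∈ Subring.map α (Subring.comap RP.subtype (seq n))) (hz0 : z ≠ 0) :
      0 ≤ ν z :=
    (hSbarval z hz0).mp ⟨n, hz⟩
  have hμle n z (hz : z ∈ genMaxSet K (Subring.map α (Subring.comap RP.subtype (seq n))))
      (hz0 : z ≠ 0) : μ n ≤ ν z :=
    hμ n ▸ csInf_le ⟨0, by rintro _ ⟨a, ⟨ha, ha0⟩, rfl⟩; exact hpos n a ha.1 ha0⟩ ⟨z, ⟨hz, hz0⟩, rfl⟩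
  have hR : R ≤ RP := hseq0 ▸ hle 0
  have hPRP (y : F) : (∃ q t : R, q ∈ P ∧ t ∉ P ∧ y * (t : F) = (q : F)) → ∃ n, y ∈ seq n := by
    rintro ⟨q, t, hq, ht, hyt⟩
    refine IsKerFraction.exists_mem hlqt hle hloc hmul hpos hμle hdiv
      (t := Subring.inclusion hR t) (q := Subring.inclusion hR q) ⟨hseq0 ▸ t.2, hseq0 ▸ q.2,
        (map_eq_zero_iff_mem hPp hker rfl).not.mpr ht, (map_eq_zero_iff_mem hPp hker rfl).mpr hq,
        hyt⟩
  exact ⟨pullbackSet_iUnion_map_eq (monotone_nat_of_le_succ fun n => (hlqt n).le) hle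
    fun d hd => hPRP d ((hker d).mp hd), hPRP⟩

/-- Let `{Rₙ}` be a sequence of local quadratic transforms of a Noetherian local domain
`R` along `R_P`, with induced sequence `{R̄ₙ}` of local quadratic transforms of
`R̄ = R/P`; set `S = ⋃ Rₙ`, `S̄ = ⋃ R̄ₙ`, and let `S̃` be the pullback of `S̄` along
`α : R_P → κ(P)`.  If `S̄` is a rank 1 valuation ring with real-valued valuation `ν` and
the multiplicity sequence `∑ₙ ν(m̄ₙ)` diverges, then `S = S̃`; that is,
`PR_P ⊆ S`. -/
theorem union_eq_pullback_of_divergent_multiplicity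
    (F : Type) [Field F] (R : Subring F)
    [IsNoetherianRing R] [IsLocalRing R]
    (hfrac : ∀ y : F, ∃ a b : R, b ≠ 0 ∧ y * (b : F) = (a : F))
    (P : Ideal R) (hPp : P.IsPrime) (hPne : P ≠ ⊥)
    (hPnm : P ≠ IsLocalRing.maximalIdeal R)
    (RP : Subring F)
    (hRP : (RP : Set F) = {y : F | ∃ a s : R, s ∉ P ∧ y * (s : F) = (a : F)})
    (K : Type) [Field K] (α : RP →+* K) (hαsurj : Function.Surjective α)
    (hker : ∀ y : RP, α y = 0 ↔
      ∃ p s : R, p ∈ P ∧ s ∉ P ∧ (y : F) * (s : F) = (p : F))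
    (seq : ℕ → Subring F) (hseq0 : seq 0 = R)
    (hseq : ∀ n, IsGenLQT F (seq n) (seq (n + 1)) ∧ seq n ≤ RP)
    (ν : K → ℝ)
    (hmul : ∀ a b : K, a ≠ 0 → b ≠ 0 → ν (a * b) = ν a + ν b)
    (hadd : ∀ a b : K, a ≠ 0 → b ≠ 0 → a + b ≠ 0 → min (ν a) (ν b) ≤ ν (a + b))
    (hSbarval : ∀ y : K, y ≠ 0 →
      ((∃ n, y ∈ Subring.map α (Subring.comap RP.subtype (seq n))) ↔ 0 ≤ ν y))
    (μ : ℕ → ℝ)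
    (hμ : ∀ n, μ n = sInf (ν ''
      {a | a ∈ genMaxSet K (Subring.map α (Subring.comap RP.subtype (seq n))) ∧ a ≠ 0}))
    (hdiv : Tendsto (fun N => ∑ n ∈ Finset.range N, μ n) atTop atTop) :
    pullbackSet F RP K α
        (⋃ n, (Subring.map α (Subring.comap RP.subtype (seq n)) : Set K)) =
      ⋃ n, (seq n : Set F) ∧
    ∀ y : F, (∃ q t : R, q ∈ P ∧ t ∉ P ∧ y * (t : F) = (q : F)) →
      ∃ n, y ∈ seq n :=
  union_eq_pullback_of_divergent_multiplicity_general F R P hPp RP K α hker seq hseq0 hseq ν hmul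
    hSbarval μ hμ hdiv
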